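/- In the sign-adaptive SQPRT construction below, with ρ0 ≠ ρ1, the normalized variance of the log-likelihood ratio sum converges: lim_{k→∞} E_0[(S_k − E_0[S_k])²]/k = Var(W_0), where W_0 = log P_{ρ0,m_0*}(U_0) − log P_{ρ1,m_0*}(U_0) with U_0 distributed according to P_{ρ0,m_0*}. -/

import Mathlib

/-!
Under `ρ0` both measurements have positive drift. For `m0*` the drift is `D_M(ρ0‖ρ1) > 0`; for
`m1*` it is `D(P_{ρ0,m1*}‖P_{ρ1,m1*})`, which is positive because optimality of `m1*` for
`D_M(ρ1‖ρ0) > 0` forces `P_{ρ0,m1*} ≠ P_{ρ1,m1*}`. A Chernoff argument then gives `t > 0`,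
`r < 1` with `E₀[exp(-t Sₖ)] ≤ rᵏ`. Since the process can only use `m1*` at step `k + 1` when
`Sₖ ≤ 0`, the probability `εₖ` of that event and `E₀[Sₖ; M_{k+1} ≠ m0*]` decay geometrically.
Conditioning on the first `k` outcomes,
`Var Sₖ₊₁ - Var Sₖ = E v(M_{k+1}) + Var μ(M_{k+1}) + 2 Cov(Sₖ, μ(M_{k+1}))`,
where `μ`, `v` are the one-step mean and variance of the measurement used. Every term except
`v(m0*) = Var W₀` is `O(εₖ + |E₀[Sₖ; M_{k+1} ≠ m0*]| + k εₖ)`, so the increments tend to `Var W₀`,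
and so does `Var Sₖ / k` by Cesàro.
-/

open Filter
open scoped ENNReal ComplexOrder Classical

namespace SQHT

/-- `d × d` complex matrices over an index type `ι`. -/
abbrev Mat (ι : Type) := Matrix ι ι ℂ

variable {d : ℕ}

/-- A quantum state: positive semidefinite with unit trace. -/
def IsState (ρ : Mat (Fin d)) : Prop := ρ.PosSemidef ∧ ρ.trace = 1

/-- Born probability of outcome `x` when measuring `m` on state `ρ`. -/
noncomputable def outProb (ρ : Mat (Fin d)) (m : Fin d → Mat (Fin d)) (x : Fin d) : ℝ :=
  ((ρ * m x).trace).re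

/-- Classical relative entropy (KL divergence) of two pmfs on a finite set,
with the convention `0 log 0 = 0`. -/
noncomputable def KL {X : Type*} [Fintype X] (P Q : X → ℝ) : ℝ :=
  ∑ x, if P x = 0 then 0 else P x * Real.log (P x / Q x)

/-- A rank-one projective measurement with `d` outcomes. -/
def IsRankOnePVM (m : Fin d → Mat (Fin d)) : Prop :=
  (∀ x, (m x).PosSemidef) ∧ ∑ x, m x = 1 ∧ (∀ x, m x * m x = m x) ∧ ∀ x, (m x).rank = 1

/-- The measured relative entropy `D_M(ρ0‖ρ1)`. -/
noncomputable def Dmeas (ρ0 ρ1 : Mat (Fin d)) : ℝ :=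
  ⨆ m : {m : Fin d → Mat (Fin d) // IsRankOnePVM m}, KL (outProb ρ0 m.1) (outProb ρ1 m.1)

/-- Single-outcome log-likelihood ratio for measurement `m`. -/
noncomputable def llr (ρ0 ρ1 : Mat (Fin d)) (m : Fin d → Mat (Fin d)) (x : Fin d) : ℝ :=
  Real.log (outProb ρ0 m x) - Real.log (outProb ρ1 m x)

/-- The sign-adaptive SQPRT dynamics: given the initial coin `b` (`M_1 = m0` if `b`,
else `M_1 = m1`) and the first `k` outcomes, return the pair consisting of the
measurement `M_{k+1}` to be used next and the current log-likelihood sum `S_k`;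
for `k ≥ 1`, `M_{k+1} = m0` if `S_k ≥ 0` and `M_{k+1} = m1` otherwise. -/
noncomputable def run (ρ0 ρ1 : Mat (Fin d)) (m0 m1 : Fin d → Mat (Fin d)) (b : Bool) :
    (k : ℕ) → (Fin k → Fin d) → ((Fin d → Mat (Fin d)) × ℝ)
  | 0, _ => (bif b then m0 else m1, 0)
  | (k + 1), x =>
      let p := run ρ0 ρ1 m0 m1 b k (Fin.init x)
      let Snew := p.2 + llr ρ0 ρ1 p.1 (x (Fin.last k))
      (if 0 ≤ Snew then m0 else m1, Snew)

/-- The value `S_k` of the accumulated log-likelihood ratio along a path. -/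
noncomputable def Sval (ρ0 ρ1 : Mat (Fin d)) (m0 m1 : Fin d → Mat (Fin d)) (b : Bool)
    (k : ℕ) (x : Fin k → Fin d) : ℝ :=
  (run ρ0 ρ1 m0 m1 b k x).2

/-- The probability, when the true state is `ρ`, of the initial coin being `b`
and the first `k` outcomes being `x` (the coin is uniform on two values). -/
noncomputable def pathProb (ρ0 ρ1 : Mat (Fin d)) (m0 m1 : Fin d → Mat (Fin d))
    (ρ : Mat (Fin d)) (b : Bool) : (k : ℕ) → (Fin k → Fin d) → ℝ
  | 0, _ => 1 / 2
  | (k + 1), x =>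
      pathProb ρ0 ρ1 m0 m1 ρ b k (Fin.init x) *
        outProb ρ ((run ρ0 ρ1 m0 m1 b k (Fin.init x)).1) (x (Fin.last k))

/-- Expectation, under the true state `ρ0`, of a path functional after `k` steps. -/
noncomputable def E0 (ρ0 ρ1 : Mat (Fin d)) (m0 m1 : Fin d → Mat (Fin d)) (k : ℕ)
    (f : Bool → (Fin k → Fin d) → ℝ) : ℝ :=
  ∑ b : Bool, ∑ x : Fin k → Fin d, pathProb ρ0 ρ1 m0 m1 ρ0 b k x * f b x

/-- `P_0(S_k < 0)` for the sign-adaptive SQPRT. -/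
noncomputable def probSneg (ρ0 ρ1 : Mat (Fin d)) (m0 m1 : Fin d → Mat (Fin d)) (k : ℕ) : ℝ :=
  ∑ b : Bool, ∑ x : Fin k → Fin d,
    if Sval ρ0 ρ1 m0 m1 b k x < 0 then pathProb ρ0 ρ1 m0 m1 ρ0 b k x else 0

end SQHT

namespace SQHT

/-- The mean of the single-step log-likelihood ratio `W₀` under `P_{ρ0,m0}`. -/
noncomputable def meanW0 {d : ℕ} (ρ0 ρ1 : Mat (Fin d)) (m0 : Fin d → Mat (Fin d)) : ℝ :=
  ∑ x : Fin d, outProb ρ0 m0 x * llr ρ0 ρ1 m0 x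

/-- The variance of `W₀ = log P_{ρ0,m0}(U₀) − log P_{ρ1,m0}(U₀)`, where `U₀` is
distributed according to `P_{ρ0,m0}`. -/
noncomputable def varW0 {d : ℕ} (ρ0 ρ1 : Mat (Fin d)) (m0 : Fin d → Mat (Fin d)) : ℝ :=
  ∑ x : Fin d, outProb ρ0 m0 x * (llr ρ0 ρ1 m0 x - meanW0 ρ0 ρ1 m0) ^ 2

end SQHT

open Matrix
open scoped MatrixOrder Topology

lemma Fin.sum_pi_succ_eq_sum_snoc {α : Type*} [Fintype α] {k : ℕ} (f : (Fin (k + 1) → α) → ℝ) :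
    ∑ x, f x = ∑ y : Fin k → α, ∑ a, f (Fin.snoc y a) := by
  rw [← (Fin.snocEquiv fun _ => α).sum_comp, Fintype.sum_prod_type, Finset.sum_comm]
  rfl

lemma HasDerivAt.eventually_nhdsGT_lt {f : ℝ → ℝ} {f' x : ℝ} (hf : HasDerivAt f f' x)
    (hf' : f' < 0) : ∀ᶠ t in 𝓝[>] x, f t < f x := by
  have hslope := (hasDerivAt_iff_tendsto_slope.mp hf).mono_left (nhdsGT_le_nhdsNE x)
  filter_upwards [hslope.eventually (gt_mem_nhds hf'), self_mem_nhdsWithin] with t ht hxt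
  rw [slope_def_field, div_neg_iff] at ht
  rcases ht with ⟨-, h⟩ | ⟨h, -⟩
  · exact absurd (sub_pos.mpr hxt) h.not_gt
  · exact sub_neg.mp h

lemma tendsto_div_natCast_of_tendsto_sub {u : ℕ → ℝ} {l : ℝ}
    (h : Tendsto (fun k => u (k + 1) - u k) atTop (𝓝 l)) :
    Tendsto (fun k => u k / k) atTop (𝓝 l) := by
  have h0 : Tendsto (fun k : ℕ => u 0 / k) atTop (𝓝 0) :=
    tendsto_const_nhds.div_atTop tendsto_natCast_atTop_atTop
  refine (add_zero l ▸ h.cesaro.add h0).congr fun k => ?_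
  rw [Finset.sum_range_sub, inv_mul_eq_div, sub_div, sub_add_cancel]

namespace Matrix

variable {n : Type*} [Fintype n] {A B N : Matrix n n ℂ}

lemma PosSemidef.re_trace_mul_nonneg (hA : A.PosSemidef) (hN : N.PosSemidef) :
    0 ≤ (A * N).trace.re := by
  obtain ⟨C, rfl⟩ := CStarAlgebra.nonneg_iff_eq_star_mul_self.mp hN.nonneg
  rw [← mul_assoc, trace_mul_cycle, star_eq_conjTranspose]
  exact (Complex.nonneg_iff.mp (hA.mul_mul_conjTranspose_same C).trace_nonneg).1

lemma re_trace_mul_le_of_le (hAB : A ≤ B) (hN : N.PosSemidef) :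
    (A * N).trace.re ≤ (B * N).trace.re := by
  have := (le_iff.mp hAB).re_trace_mul_nonneg hN
  rwa [sub_mul, trace_sub, Complex.sub_re, sub_nonneg] at this

lemma PosDef.exists_pos_smul_one_le [DecidableEq n] (hA : A.PosDef) :
    ∃ c : ℝ, 0 < c ∧ (c : ℂ) • (1 : Matrix n n ℂ) ≤ A := by
  cases isEmpty_or_nonempty n
  · exact ⟨1, one_pos, (Subsingleton.elim _ _).le⟩
  obtain ⟨c, hc, hle⟩ := (CFC.exists_pos_algebraMap_le_iff hA.isHermitian.isSelfAdjoint).2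
    fun x hx => hA.isStrictlyPositive.spectrum_pos hx
  exact ⟨c, hc, by simpa [Algebra.algebraMap_eq_smul_one] using hle⟩

lemma PosDef.re_trace_mul_pos (hA : A.PosDef) (hN : N.PosSemidef) (hN0 : N ≠ 0) :
    0 < (A * N).trace.re := by
  classical
  obtain ⟨c, hc, hcA⟩ := hA.exists_pos_smul_one_le
  have htr : 0 < N.trace.re :=
    (Complex.pos_iff.mp (lt_of_le_of_ne hN.trace_nonneg
      (Ne.symm (mt hN.trace_eq_zero_iff.mp hN0)))).1
  calc 0 < c * N.trace.re := mul_pos hc htr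
    _ = ((c : ℂ) • (1 : Matrix n n ℂ) * N).trace.re := by simp
    _ ≤ (A * N).trace.re := re_trace_mul_le_of_le hcA hN

open scoped Matrix.Norms.L2Operator in
lemma IsHermitian.exists_re_trace_mul_le (hB : B.IsHermitian) (hA : A.PosDef) :
    ∃ C : ℝ, ∀ N : Matrix n n ℂ, N.PosSemidef → (B * N).trace.re ≤ C * (A * N).trace.re := by
  classical
  obtain ⟨c, hc, hcA⟩ := hA.exists_pos_smul_one_le
  have hB1 : B ≤ (‖B‖ : ℂ) • 1 := by
    simpa [Algebra.algebraMap_eq_smul_one] using hB.isSelfAdjoint.le_algebraMap_norm_self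
  have hBA : B ≤ ((‖B‖ / c : ℝ) : ℂ) • A := by
    refine hB1.trans (le_iff.mpr ?_)
    convert (le_iff.mp hcA).smul (by positivity : (0 : ℂ) ≤ ((‖B‖ / c : ℝ) : ℂ)) using 1
    rw [smul_sub, smul_smul, ← Complex.ofReal_mul, div_mul_cancel₀ _ hc.ne']
  refine ⟨‖B‖ / c, fun N hN => (re_trace_mul_le_of_le hBA hN).trans_eq ?_⟩
  simp

end Matrix

namespace SQHT

open InformationTheory

section KL

variable {X : Type*} [Fintype X] {P Q : X → ℝ}

/-- Summandwise, `P log (P / Q) = Q klFun (P / Q) + (P - Q)`; this also covers `P x = 0`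
because `klFun 0 = 1`. -/
lemma KL_eq_sum_mul_klFun (hQ : ∀ x, 0 < Q x) (hsum : ∑ x, P x = ∑ x, Q x) :
    KL P Q = ∑ x, Q x * klFun (P x / Q x) := by
  have hterm : ∀ x, (if P x = 0 then 0 else P x * Real.log (P x / Q x))
      = Q x * klFun (P x / Q x) + (P x - Q x) := fun x => by
    have hQx := (hQ x).ne'
    split_ifs with h
    · simp [h, klFun_zero]
    · rw [klFun_apply]; field_simp; ring
  rw [KL, Finset.sum_congr rfl fun x _ => hterm x, Finset.sum_add_distrib, Finset.sum_sub_distrib,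
    hsum, sub_self, add_zero]

lemma KL_pos (hP : ∀ x, 0 ≤ P x) (hQ : ∀ x, 0 < Q x) (hsum : ∑ x, P x = ∑ x, Q x)
    (hne : P ≠ Q) : 0 < KL P Q := by
  obtain ⟨x, hx⟩ := Function.ne_iff.mp hne
  have hnonneg : ∀ y, 0 ≤ Q y * klFun (P y / Q y) := fun y =>
    mul_nonneg (hQ y).le (klFun_nonneg (div_nonneg (hP y) (hQ y).le))
  rw [KL_eq_sum_mul_klFun hQ hsum]
  refine Finset.sum_pos' (fun y _ => hnonneg y) ⟨x, Finset.mem_univ x, ?_⟩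
  refine lt_of_le_of_ne (hnonneg x) (Ne.symm (mul_ne_zero (hQ x).ne' ?_))
  rwa [Ne, klFun_eq_zero_iff (div_nonneg (hP x) (hQ x).le), div_eq_one_iff_eq (hQ x).ne']

lemma KL_self (P : X → ℝ) : KL P P = 0 :=
  Finset.sum_eq_zero fun x _ => by split_ifs with h <;> simp [h]

lemma KL_le_log {C : ℝ} (hP : ∀ x, 0 < P x) (hQ : ∀ x, 0 < Q x) (hsum : ∑ x, P x = 1)
    (hC : ∀ x, P x ≤ C * Q x) : KL P Q ≤ Real.log C := by
  calc KL P Q ≤ ∑ x, P x * Real.log C := Finset.sum_le_sum fun x _ => by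
        rw [if_neg (hP x).ne']
        exact mul_le_mul_of_nonneg_left
          (Real.log_le_log (div_pos (hP x) (hQ x)) ((div_le_iff₀ (hQ x)).mpr (hC x))) (hP x).le
    _ = Real.log C := by rw [← Finset.sum_mul, hsum, one_mul]

lemma KL_eq_sum_mul_log_sub_log (hP : ∀ x, 0 < P x) (hQ : ∀ x, 0 < Q x) :
    KL P Q = ∑ x, P x * (Real.log (P x) - Real.log (Q x)) :=
  Finset.sum_congr rfl fun x _ => by
    rw [if_neg (hP x).ne', Real.log_div (hP x).ne' (hQ x).ne']

end KL

variable {d : ℕ}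

def IsPOVM (m : Fin d → Mat (Fin d)) : Prop := (∀ x, (m x).PosSemidef) ∧ ∑ x, m x = 1

lemma IsRankOnePVM.isPOVM {m : Fin d → Mat (Fin d)} (hm : IsRankOnePVM m) : IsPOVM m :=
  ⟨hm.1, hm.2.1⟩

lemma IsRankOnePVM.ne_zero {m : Fin d → Mat (Fin d)} (hm : IsRankOnePVM m) (x : Fin d) :
    m x ≠ 0 := fun h => by simpa [h] using hm.2.2.2 x

section Born

variable {ρ σ : Mat (Fin d)} {m : Fin d → Mat (Fin d)}

lemma outProb_nonneg (hρ : IsState ρ) (hm : IsPOVM m) (x : Fin d) : 0 ≤ outProb ρ m x :=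
  hρ.1.re_trace_mul_nonneg (hm.1 x)

lemma outProb_pos (hρ : ρ.PosDef) (hm : IsRankOnePVM m) (x : Fin d) : 0 < outProb ρ m x :=
  hρ.re_trace_mul_pos (hm.1 x) (hm.ne_zero x)

lemma sum_outProb (hρ : IsState ρ) (hm : IsPOVM m) : ∑ x, outProb ρ m x = 1 := by
  simp only [outProb, ← Complex.re_sum, ← trace_sum, ← Finset.mul_sum, hm.2, mul_one, hρ.2,
    Complex.one_re]

lemma KL_outProb_pos (hρ : IsState ρ) (hσ : IsState σ) (hρ' : ρ.PosDef) (hσ' : σ.PosDef)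
    (hm : IsRankOnePVM m) (hne : outProb ρ m ≠ outProb σ m) :
    0 < KL (outProb ρ m) (outProb σ m) :=
  KL_pos (fun x => (outProb_pos hρ' hm x).le) (outProb_pos hσ' hm)
    (by rw [sum_outProb hρ hm.isPOVM, sum_outProb hσ hm.isPOVM]) hne

lemma meanW0_pos (hρ : IsState ρ) (hσ : IsState σ) (hρ' : ρ.PosDef) (hσ' : σ.PosDef)
    (hm : IsRankOnePVM m) (hne : outProb ρ m ≠ outProb σ m) : 0 < meanW0 ρ σ m := by
  unfold meanW0 llr
  rw [← KL_eq_sum_mul_log_sub_log (outProb_pos hρ' hm) (outProb_pos hσ' hm)]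
  exact KL_outProb_pos hρ hσ hρ' hσ' hm hne

end Born

def basisPVM (U : Mat (Fin d)) (x : Fin d) : Mat (Fin d) := U * diagonal (Pi.single x 1) * star U

lemma isRankOnePVM_basisPVM {U : Mat (Fin d)} (hU : U ∈ unitaryGroup (Fin d) ℂ) :
    IsRankOnePVM (basisPVM U) := by
  have hUU : star U * U = 1 := (mem_unitaryGroup_iff').mp hU
  refine ⟨fun x => ?_, ?_, fun x => ?_, fun x => ?_⟩
  · simpa [basisPVM, star_eq_conjTranspose] using
      (PosSemidef.diagonal (Pi.single_nonneg.mpr zero_le_one)).mul_mul_conjTranspose_same U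
  · simp only [basisPVM, ← Finset.sum_mul, ← Finset.mul_sum, ← diagonalAddMonoidHom_apply,
      ← map_sum, Finset.univ_sum_single]
    simpa using (mem_unitaryGroup_iff).mp hU
  · have hD : diagonal (Pi.single x 1) * diagonal (Pi.single x 1)
        = diagonal (Pi.single x (1 : ℂ)) := by
      rw [diagonal_mul_diagonal, ← Pi.mul_def, ← Pi.single_mul, one_mul]
    rw [basisPVM, mul_assoc, ← mul_assoc (star U), ← mul_assoc (star U), hUU, one_mul,
      ← mul_assoc, mul_assoc U, hD]
  · rw [basisPVM, rank_mul_eq_left_of_isUnit_det _ _ (isUnit_det_of_right_inverse hUU),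
      rank_mul_eq_right_of_isUnit_det _ _ (isUnit_det_of_left_inverse hUU), rank_diagonal]
    simp [Pi.single_apply]

lemma outProb_basisPVM (ρ U : Mat (Fin d)) (x : Fin d) :
    outProb ρ (basisPVM U) x = ((star U * ρ * U) x x).re := by
  rw [outProb, basisPVM, ← mul_assoc, ← mul_assoc, trace_mul_cycle, ← mul_assoc]
  simp [trace, mul_apply, diagonal, Pi.single_apply]

/-- Measure in an eigenbasis of `ρ - σ`: the outcome distributions differ by its eigenvalues. -/
lemma exists_isRankOnePVM_outProb_ne {ρ σ : Mat (Fin d)} (hρ : ρ.IsHermitian)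
    (hσ : σ.IsHermitian) (hne : ρ ≠ σ) : ∃ m, IsRankOnePVM m ∧ outProb ρ m ≠ outProb σ m := by
  have hA := hρ.sub hσ
  obtain ⟨x, hx⟩ := Function.ne_iff.mp (mt hA.eigenvalues_eq_zero_iff.mp (sub_ne_zero.mpr hne))
  let U := hA.eigenvectorUnitary
  refine ⟨basisPVM U, isRankOnePVM_basisPVM U.2, fun h => hx ?_⟩
  have hdiag := congrArg (fun M => (M x x).re) hA.conjStarAlgAut_star_eigenvectorUnitary
  have hx' := congrFun h x
  simp only [outProb_basisPVM] at hx'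
  simp [mul_sub, sub_mul] at hdiag
  rw [Pi.zero_apply, ← hdiag]
  exact sub_eq_zero.mpr hx'

section MeasuredEntropy

variable {ρ σ : Mat (Fin d)}

/-- `Dmeas` is a `⨆` of reals, which is `0` for an unbounded family; this bound makes it a
genuine supremum. -/
lemma bddAbove_KL_outProb (hρ : IsState ρ) (hρ' : ρ.PosDef) (hσ : σ.PosDef) :
    BddAbove (Set.range fun m : {m : Fin d → Mat (Fin d) // IsRankOnePVM m} =>
      KL (outProb ρ m.1) (outProb σ m.1)) := by
  obtain ⟨C, hC⟩ := hρ'.isHermitian.exists_re_trace_mul_le hσ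
  refine ⟨Real.log C, Set.forall_mem_range.mpr fun m => ?_⟩
  exact KL_le_log (outProb_pos hρ' m.2) (outProb_pos hσ m.2) (sum_outProb hρ m.2.isPOVM)
    fun x => hC _ (m.2.1 x)

lemma Dmeas_pos (hρ : IsState ρ) (hσ : IsState σ) (hρ' : ρ.PosDef) (hσ' : σ.PosDef)
    (hne : ρ ≠ σ) : 0 < Dmeas ρ σ := by
  obtain ⟨m, hm, hmne⟩ := exists_isRankOnePVM_outProb_ne hρ'.isHermitian hσ'.isHermitian hne
  exact (KL_outProb_pos hρ hσ hρ' hσ' hm hmne).trans_le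
    (le_ciSup (bddAbove_KL_outProb hρ hρ' hσ') ⟨m, hm⟩)

lemma outProb_ne_of_KL_eq_Dmeas (hρ : IsState ρ) (hσ : IsState σ) (hρ' : ρ.PosDef)
    (hσ' : σ.PosDef) (hne : ρ ≠ σ) {m : Fin d → Mat (Fin d)}
    (hopt : KL (outProb ρ m) (outProb σ m) = Dmeas ρ σ) : outProb ρ m ≠ outProb σ m := by
  intro h
  rw [h, KL_self] at hopt
  exact (Dmeas_pos hρ hσ hρ' hσ' hne).ne hopt

end MeasuredEntropy

section Dynamics

variable {ρ0 ρ1 : Mat (Fin d)} {m0 m1 : Fin d → Mat (Fin d)}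

lemma run_fst_eq_or (b : Bool) (k : ℕ) (x : Fin k → Fin d) :
    (run ρ0 ρ1 m0 m1 b k x).1 = m0 ∨ (run ρ0 ρ1 m0 m1 b k x).1 = m1 := by
  cases k with
  | zero => cases b <;> simp [run]
  | succ k => rw [run]; split_ifs <;> simp

lemma run_succ_fst (b : Bool) (k : ℕ) (x : Fin (k + 1) → Fin d) :
    (run ρ0 ρ1 m0 m1 b (k + 1) x).1 = if 0 ≤ Sval ρ0 ρ1 m0 m1 b (k + 1) x then m0 else m1 :=
  rfl

lemma Sval_zero (b : Bool) (x : Fin 0 → Fin d) : Sval ρ0 ρ1 m0 m1 b 0 x = 0 := rfl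

lemma Sval_snoc (b : Bool) (k : ℕ) (y : Fin k → Fin d) (a : Fin d) :
    Sval ρ0 ρ1 m0 m1 b (k + 1) (Fin.snoc y a)
      = Sval ρ0 ρ1 m0 m1 b k y + llr ρ0 ρ1 (run ρ0 ρ1 m0 m1 b k y).1 a := by
  simp [Sval, run]

lemma pathProb_snoc (ρ : Mat (Fin d)) (b : Bool) (k : ℕ) (y : Fin k → Fin d) (a : Fin d) :
    pathProb ρ0 ρ1 m0 m1 ρ b (k + 1) (Fin.snoc y a)
      = pathProb ρ0 ρ1 m0 m1 ρ b k y * outProb ρ (run ρ0 ρ1 m0 m1 b k y).1 a := by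
  simp [pathProb]

lemma isPOVM_run_fst (hm0 : IsPOVM m0) (hm1 : IsPOVM m1) (b : Bool) (k : ℕ)
    (x : Fin k → Fin d) : IsPOVM (run ρ0 ρ1 m0 m1 b k x).1 := by
  rcases run_fst_eq_or (ρ0 := ρ0) (ρ1 := ρ1) (m0 := m0) (m1 := m1) b k x with h | h <;> rw [h]
  exacts [hm0, hm1]

lemma pathProb_nonneg {ρ : Mat (Fin d)} (hρ : IsState ρ) (hm0 : IsPOVM m0) (hm1 : IsPOVM m1)
    (b : Bool) (k : ℕ) (x : Fin k → Fin d) : 0 ≤ pathProb ρ0 ρ1 m0 m1 ρ b k x := by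
  induction k with
  | zero => simp [pathProb]
  | succ k ih => exact mul_nonneg (ih _) (outProb_nonneg hρ (isPOVM_run_fst hm0 hm1 b k _) _)

end Dynamics

/-- `meanW0 ρ0 ρ1 m`, `varW0 ρ0 ρ1 m` and `llrLaplace ρ0 ρ1 m t` are used for any measurement
`m`: they are the mean, the variance and `E[exp (-t Z)]` of one log-likelihood increment `Z`
obtained by measuring `ρ0` with `m`. -/
noncomputable def llrLaplace (ρ0 ρ1 : Mat (Fin d)) (m : Fin d → Mat (Fin d)) (t : ℝ) : ℝ :=
  ∑ a, outProb ρ0 m a * Real.exp (-(t * llr ρ0 ρ1 m a))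

section Statistics

variable (ρ0 ρ1 : Mat (Fin d)) (m0 m1 : Fin d → Mat (Fin d)) (k : ℕ)

noncomputable def switchInd (b : Bool) (x : Fin k → Fin d) : ℝ :=
  if (run ρ0 ρ1 m0 m1 b k x).1 = m0 then 0 else 1

noncomputable def meanS : ℝ := E0 ρ0 ρ1 m0 m1 k fun b x => Sval ρ0 ρ1 m0 m1 b k x

noncomputable def sqMeanS : ℝ := E0 ρ0 ρ1 m0 m1 k fun b x => Sval ρ0 ρ1 m0 m1 b k x ^ 2

noncomputable def varS : ℝ :=
  E0 ρ0 ρ1 m0 m1 k fun b x => (Sval ρ0 ρ1 m0 m1 b k x - meanS ρ0 ρ1 m0 m1 k) ^ 2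

noncomputable def switchProb : ℝ := E0 ρ0 ρ1 m0 m1 k (switchInd ρ0 ρ1 m0 m1 k)

noncomputable def switchCorr : ℝ :=
  E0 ρ0 ρ1 m0 m1 k fun b x => Sval ρ0 ρ1 m0 m1 b k x * switchInd ρ0 ρ1 m0 m1 k b x

end Statistics

variable {ρ0 ρ1 : Mat (Fin d)} {m0 m1 : Fin d → Mat (Fin d)} {k : ℕ}

section Expectation

lemma E0_succ (f : Bool → (Fin (k + 1) → Fin d) → ℝ) :
    E0 ρ0 ρ1 m0 m1 (k + 1) f = E0 ρ0 ρ1 m0 m1 k fun b y =>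
      ∑ a, outProb ρ0 (run ρ0 ρ1 m0 m1 b k y).1 a * f b (Fin.snoc y a) := by
  simp only [E0, Fin.sum_pi_succ_eq_sum_snoc (α := Fin d) (k := k), pathProb_snoc,
    Finset.mul_sum, mul_assoc]

lemma E0_add (f g : Bool → (Fin k → Fin d) → ℝ) :
    E0 ρ0 ρ1 m0 m1 k (fun b x => f b x + g b x) = E0 ρ0 ρ1 m0 m1 k f + E0 ρ0 ρ1 m0 m1 k g := by
  simp only [E0, mul_add, Finset.sum_add_distrib]

lemma E0_const_mul (c : ℝ) (f : Bool → (Fin k → Fin d) → ℝ) :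
    E0 ρ0 ρ1 m0 m1 k (fun b x => c * f b x) = c * E0 ρ0 ρ1 m0 m1 k f := by
  simp only [E0, Finset.mul_sum, mul_left_comm c]

lemma E0_const (h0 : IsState ρ0) (hm0 : IsPOVM m0) (hm1 : IsPOVM m1) (c : ℝ) :
    E0 ρ0 ρ1 m0 m1 k (fun _ _ => c) = c := by
  induction k with
  | zero => simp [E0, pathProb]
  | succ k ih =>
    rw [E0_succ]
    simpa only [← Finset.sum_mul, sum_outProb h0 (isPOVM_run_fst hm0 hm1 _ _ _), one_mul]
      using ih

lemma E0_mono (h0 : IsState ρ0) (hm0 : IsPOVM m0) (hm1 : IsPOVM m1)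
    {f g : Bool → (Fin k → Fin d) → ℝ} (h : ∀ b x, f b x ≤ g b x) :
    E0 ρ0 ρ1 m0 m1 k f ≤ E0 ρ0 ρ1 m0 m1 k g :=
  Finset.sum_le_sum fun b _ => Finset.sum_le_sum fun x _ =>
    mul_le_mul_of_nonneg_left (h b x) (pathProb_nonneg h0 hm0 hm1 b k x)

lemma abs_E0_le (h0 : IsState ρ0) (hm0 : IsPOVM m0) (hm1 : IsPOVM m1)
    (f : Bool → (Fin k → Fin d) → ℝ) :
    |E0 ρ0 ρ1 m0 m1 k f| ≤ E0 ρ0 ρ1 m0 m1 k fun b x => |f b x| := by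
  refine abs_le.mpr ⟨?_, E0_mono h0 hm0 hm1 fun b x => le_abs_self _⟩
  rw [← neg_le_neg_iff, neg_neg, ← neg_one_mul, ← E0_const_mul]
  exact E0_mono h0 hm0 hm1 fun b x => by linarith [neg_abs_le (f b x)]

lemma E0_comp_Sval_succ (F : ℝ → ℝ) :
    E0 ρ0 ρ1 m0 m1 (k + 1) (fun b x => F (Sval ρ0 ρ1 m0 m1 b (k + 1) x)) =
      E0 ρ0 ρ1 m0 m1 k fun b y => ∑ a, outProb ρ0 (run ρ0 ρ1 m0 m1 b k y).1 a *
        F (Sval ρ0 ρ1 m0 m1 b k y + llr ρ0 ρ1 (run ρ0 ρ1 m0 m1 b k y).1 a) := by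
  simp only [E0_succ, Sval_snoc]

end Expectation

section Moments

lemma sum_outProb_mul_add_llr (h0 : IsState ρ0) {m : Fin d → Mat (Fin d)} (hm : IsPOVM m)
    (s : ℝ) : ∑ a, outProb ρ0 m a * (s + llr ρ0 ρ1 m a) = s + meanW0 ρ0 ρ1 m := by
  simp only [mul_add, Finset.sum_add_distrib, ← Finset.sum_mul, sum_outProb h0 hm, one_mul, meanW0]

lemma sum_outProb_mul_add_llr_sq (h0 : IsState ρ0) {m : Fin d → Mat (Fin d)} (hm : IsPOVM m)
    (s : ℝ) : ∑ a, outProb ρ0 m a * (s + llr ρ0 ρ1 m a) ^ 2 =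
      s ^ 2 + (2 * (s * meanW0 ρ0 ρ1 m) + (varW0 ρ0 ρ1 m + meanW0 ρ0 ρ1 m ^ 2)) := by
  set q := outProb ρ0 m
  set z := llr ρ0 ρ1 m
  set μ := meanW0 ρ0 ρ1 m
  have hμ : ∑ a, q a * z a = μ := rfl
  have hexpand : ∀ a, q a * (s + z a) ^ 2 - q a * (z a - μ) ^ 2
      = (s ^ 2 - μ ^ 2) * q a + (2 * s + 2 * μ) * (q a * z a) := fun a => by ring
  have hsum := Finset.sum_congr rfl fun a (_ : a ∈ Finset.univ) => hexpand a
  rw [Finset.sum_sub_distrib, Finset.sum_add_distrib, ← Finset.mul_sum, ← Finset.mul_sum,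
    sum_outProb h0 hm, hμ] at hsum
  rw [varW0]
  linarith

lemma sum_outProb_mul_exp_neg_mul_add_llr (m : Fin d → Mat (Fin d)) (s t : ℝ) :
    ∑ a, outProb ρ0 m a * Real.exp (-(t * (s + llr ρ0 ρ1 m a)))
      = Real.exp (-(t * s)) * llrLaplace ρ0 ρ1 m t := by
  simp only [llrLaplace, Finset.mul_sum, mul_add, neg_add, Real.exp_add, mul_left_comm]

lemma apply_run_fst (g : (Fin d → Mat (Fin d)) → ℝ) (b : Bool) (x : Fin k → Fin d) :
    g (run ρ0 ρ1 m0 m1 b k x).1 = g m0 + (g m1 - g m0) * switchInd ρ0 ρ1 m0 m1 k b x := by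
  unfold switchInd
  split_ifs with h
  · rw [h, mul_zero, add_zero]
  · rcases run_fst_eq_or (ρ0 := ρ0) (ρ1 := ρ1) b k x with h' | h'
    · exact absurd h' h
    · rw [h', mul_one, add_sub_cancel]

lemma E0_apply_run_fst (h0 : IsState ρ0) (hm0 : IsPOVM m0) (hm1 : IsPOVM m1)
    (g : (Fin d → Mat (Fin d)) → ℝ) :
    E0 ρ0 ρ1 m0 m1 k (fun b x => g (run ρ0 ρ1 m0 m1 b k x).1)
      = g m0 + (g m1 - g m0) * switchProb ρ0 ρ1 m0 m1 k := by
  simp only [apply_run_fst g, E0_add, E0_const h0 hm0 hm1, E0_const_mul, switchProb]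

lemma E0_Sval_mul_apply_run_fst (g : (Fin d → Mat (Fin d)) → ℝ) :
    E0 ρ0 ρ1 m0 m1 k (fun b x => Sval ρ0 ρ1 m0 m1 b k x * g (run ρ0 ρ1 m0 m1 b k x).1)
      = g m0 * meanS ρ0 ρ1 m0 m1 k + (g m1 - g m0) * switchCorr ρ0 ρ1 m0 m1 k := by
  simp only [apply_run_fst g, mul_add, mul_left_comm _ (g m1 - g m0), mul_comm _ (g m0), E0_add,
    E0_const_mul, meanS, switchCorr]

lemma meanS_succ (h0 : IsState ρ0) (hm0 : IsPOVM m0) (hm1 : IsPOVM m1) :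
    meanS ρ0 ρ1 m0 m1 (k + 1) = meanS ρ0 ρ1 m0 m1 k + meanW0 ρ0 ρ1 m0 +
      (meanW0 ρ0 ρ1 m1 - meanW0 ρ0 ρ1 m0) * switchProb ρ0 ρ1 m0 m1 k := by
  simp only [meanS, E0_comp_Sval_succ (fun s => s),
    sum_outProb_mul_add_llr h0 (isPOVM_run_fst hm0 hm1 _ _ _), E0_add,
    E0_apply_run_fst h0 hm0 hm1 (meanW0 ρ0 ρ1)]
  ring

lemma sqMeanS_succ (h0 : IsState ρ0) (hm0 : IsPOVM m0) (hm1 : IsPOVM m1) :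
    sqMeanS ρ0 ρ1 m0 m1 (k + 1) = sqMeanS ρ0 ρ1 m0 m1 k
      + 2 * (meanW0 ρ0 ρ1 m0 * meanS ρ0 ρ1 m0 m1 k
        + (meanW0 ρ0 ρ1 m1 - meanW0 ρ0 ρ1 m0) * switchCorr ρ0 ρ1 m0 m1 k)
      + (varW0 ρ0 ρ1 m0 + (varW0 ρ0 ρ1 m1 - varW0 ρ0 ρ1 m0) * switchProb ρ0 ρ1 m0 m1 k)
      + (meanW0 ρ0 ρ1 m0 ^ 2
        + (meanW0 ρ0 ρ1 m1 ^ 2 - meanW0 ρ0 ρ1 m0 ^ 2) * switchProb ρ0 ρ1 m0 m1 k) := by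
  simp only [sqMeanS, E0_comp_Sval_succ (fun s => s ^ 2),
    sum_outProb_mul_add_llr_sq h0 (isPOVM_run_fst hm0 hm1 _ _ _), E0_add, E0_const_mul,
    E0_Sval_mul_apply_run_fst (meanW0 ρ0 ρ1), E0_apply_run_fst h0 hm0 hm1 (varW0 ρ0 ρ1),
    E0_apply_run_fst h0 hm0 hm1 (fun m => meanW0 ρ0 ρ1 m ^ 2)]
  ring

lemma varS_eq (h0 : IsState ρ0) (hm0 : IsPOVM m0) (hm1 : IsPOVM m1) :
    varS ρ0 ρ1 m0 m1 k = sqMeanS ρ0 ρ1 m0 m1 k - meanS ρ0 ρ1 m0 m1 k ^ 2 := by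
  have hexpand : ∀ b x, (Sval ρ0 ρ1 m0 m1 b k x - meanS ρ0 ρ1 m0 m1 k) ^ 2 =
      Sval ρ0 ρ1 m0 m1 b k x ^ 2 + ((-2 * meanS ρ0 ρ1 m0 m1 k) * Sval ρ0 ρ1 m0 m1 b k x
        + meanS ρ0 ρ1 m0 m1 k ^ 2) := fun b x => by ring
  simp only [varS, hexpand, E0_add, E0_const_mul, E0_const h0 hm0 hm1]
  rw [← sqMeanS, ← meanS]
  ring

/-- `E v(M) + Var μ(M) + 2 Cov(Sₖ, μ(M))` for `M = M_{k+1}`, written with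
`μ(M) = μ(m0) + (μ(m1) - μ(m0)) switchInd` and likewise for `v`. -/
lemma varS_succ_sub (h0 : IsState ρ0) (hm0 : IsPOVM m0) (hm1 : IsPOVM m1) :
    varS ρ0 ρ1 m0 m1 (k + 1) - varS ρ0 ρ1 m0 m1 k = varW0 ρ0 ρ1 m0
      + (varW0 ρ0 ρ1 m1 - varW0 ρ0 ρ1 m0) * switchProb ρ0 ρ1 m0 m1 k
      + (meanW0 ρ0 ρ1 m1 - meanW0 ρ0 ρ1 m0) ^ 2 * switchProb ρ0 ρ1 m0 m1 k
        * (1 - switchProb ρ0 ρ1 m0 m1 k)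
      + 2 * (meanW0 ρ0 ρ1 m1 - meanW0 ρ0 ρ1 m0)
        * (switchCorr ρ0 ρ1 m0 m1 k - meanS ρ0 ρ1 m0 m1 k * switchProb ρ0 ρ1 m0 m1 k) := by
  rw [varS_eq h0 hm0 hm1, varS_eq h0 hm0 hm1, sqMeanS_succ h0 hm0 hm1, meanS_succ h0 hm0 hm1]
  ring

end Moments

section Chernoff

lemma E0_exp_neg_mul_Sval_le (h0 : IsState ρ0) (hm0 : IsPOVM m0) (hm1 : IsPOVM m1) {t r : ℝ}
    (hr : 0 ≤ r) (hL0 : llrLaplace ρ0 ρ1 m0 t ≤ r) (hL1 : llrLaplace ρ0 ρ1 m1 t ≤ r) :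
    E0 ρ0 ρ1 m0 m1 k (fun b x => Real.exp (-(t * Sval ρ0 ρ1 m0 m1 b k x))) ≤ r ^ k := by
  induction k with
  | zero => simp [Sval_zero, E0_const h0 hm0 hm1]
  | succ k ih =>
    simp only [E0_comp_Sval_succ (fun s => Real.exp (-(t * s))),
      sum_outProb_mul_exp_neg_mul_add_llr]
    calc _ ≤ E0 ρ0 ρ1 m0 m1 k fun b y => r * Real.exp (-(t * Sval ρ0 ρ1 m0 m1 b k y)) := by
          refine E0_mono h0 hm0 hm1 fun b y => ?_
          rw [mul_comm r]
          refine mul_le_mul_of_nonneg_left ?_ (Real.exp_pos _).le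
          rcases run_fst_eq_or (ρ0 := ρ0) (ρ1 := ρ1) (m0 := m0) (m1 := m1) b k y with h | h <;>
            rw [h]
          exacts [hL0, hL1]
      _ ≤ r ^ (k + 1) := by
          rw [E0_const_mul, pow_succ']
          exact mul_le_mul_of_nonneg_left ih hr

lemma hasDerivAt_llrLaplace_zero (m : Fin d → Mat (Fin d)) :
    HasDerivAt (llrLaplace ρ0 ρ1 m) (-meanW0 ρ0 ρ1 m) 0 := by
  have h : ∀ a, HasDerivAt (fun t => outProb ρ0 m a * Real.exp (-(t * llr ρ0 ρ1 m a)))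
      (outProb ρ0 m a * (Real.exp (-(0 * llr ρ0 ρ1 m a)) * -(1 * llr ρ0 ρ1 m a))) 0 :=
    fun a => (((hasDerivAt_id 0).mul_const _).neg.exp).const_mul _
  have hsum := HasDerivAt.fun_sum (u := Finset.univ) fun a _ => h a
  simp only [zero_mul, neg_zero, Real.exp_zero, one_mul, mul_neg, Finset.sum_neg_distrib] at hsum
  exact hsum

lemma llrLaplace_nonneg (h0 : IsState ρ0) {m : Fin d → Mat (Fin d)} (hm : IsPOVM m) (t : ℝ) :
    0 ≤ llrLaplace ρ0 ρ1 m t :=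
  Finset.sum_nonneg fun a _ => mul_nonneg (outProb_nonneg h0 hm a) (Real.exp_pos _).le

/-- `llrLaplace m` equals `1` at `0`, with slope `-meanW0 m < 0` there. -/
lemma exists_llrLaplace_le (h0 : IsState ρ0) (hm0 : IsPOVM m0) (hm1 : IsPOVM m1)
    (hμ0 : 0 < meanW0 ρ0 ρ1 m0) (hμ1 : 0 < meanW0 ρ0 ρ1 m1) :
    ∃ t r, 0 < t ∧ 0 ≤ r ∧ r < 1 ∧ llrLaplace ρ0 ρ1 m0 t ≤ r ∧ llrLaplace ρ0 ρ1 m1 t ≤ r := by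
  have hlt : ∀ m, IsPOVM m → 0 < meanW0 ρ0 ρ1 m → ∀ᶠ t in 𝓝[>] 0, llrLaplace ρ0 ρ1 m t < 1 :=
    fun m hm hμ => by
      have h1 : llrLaplace ρ0 ρ1 m 0 = 1 := by simp [llrLaplace, sum_outProb h0 hm]
      simpa [h1] using (hasDerivAt_llrLaplace_zero m).eventually_nhdsGT_lt (neg_neg_of_pos hμ)
  obtain ⟨t, h0t, h1t, ht⟩ :=
    ((hlt m0 hm0 hμ0).and ((hlt m1 hm1 hμ1).and self_mem_nhdsWithin)).exists
  exact ⟨t, _, ht, (llrLaplace_nonneg h0 hm0 t).trans (le_max_left _ _), max_lt h0t h1t,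
    le_max_left _ _, le_max_right _ _⟩

end Chernoff

section Switching

lemma Sval_nonpos_of_run_fst_ne {b : Bool} {x : Fin k → Fin d}
    (h : (run ρ0 ρ1 m0 m1 b k x).1 ≠ m0) : Sval ρ0 ρ1 m0 m1 b k x ≤ 0 := by
  cases k with
  | zero => exact (Sval_zero b x).le
  | succ k =>
    rw [run_succ_fst] at h
    by_contra hS
    exact h (if_pos (not_le.mp hS).le)

lemma switchInd_nonneg (b : Bool) (x : Fin k → Fin d) : 0 ≤ switchInd ρ0 ρ1 m0 m1 k b x := by
  unfold switchInd; split_ifs <;> norm_num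

lemma switchInd_le_exp {t : ℝ} (ht : 0 ≤ t) (b : Bool) (x : Fin k → Fin d) :
    switchInd ρ0 ρ1 m0 m1 k b x ≤ Real.exp (-(t * Sval ρ0 ρ1 m0 m1 b k x)) := by
  unfold switchInd
  split_ifs with h
  · exact (Real.exp_pos _).le
  · exact Real.one_le_exp (neg_nonneg.mpr (mul_nonpos_of_nonneg_of_nonpos ht
      (Sval_nonpos_of_run_fst_ne h)))

lemma abs_Sval_mul_switchInd_le {t : ℝ} (ht : 0 < t) (b : Bool) (x : Fin k → Fin d) :
    |Sval ρ0 ρ1 m0 m1 b k x * switchInd ρ0 ρ1 m0 m1 k b x|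
      ≤ Real.exp (-(t * Sval ρ0 ρ1 m0 m1 b k x)) / t := by
  unfold switchInd
  split_ifs with h
  · simp only [mul_zero, abs_zero]; positivity
  · rw [mul_one, abs_of_nonpos (Sval_nonpos_of_run_fst_ne h), le_div_iff₀ ht]
    linarith [Real.add_one_le_exp (-(t * Sval ρ0 ρ1 m0 m1 b k x))]

lemma exists_abs_Sval_le : ∃ B, ∀ b k x, |Sval ρ0 ρ1 m0 m1 b k x| ≤ k * B := by
  refine ⟨∑ a, (|llr ρ0 ρ1 m0 a| + |llr ρ0 ρ1 m1 a|), fun b k x => ?_⟩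
  induction k with
  | zero => simp [Sval_zero]
  | succ k ih =>
    rw [← Fin.snoc_init_self x, Sval_snoc, Nat.cast_succ, add_one_mul]
    refine (abs_add_le _ _).trans (add_le_add (ih _) (le_trans ?_
      (Finset.single_le_sum (fun a _ => by positivity) (Finset.mem_univ (x (Fin.last k))))))
    rcases run_fst_eq_or (ρ0 := ρ0) (ρ1 := ρ1) (m0 := m0) (m1 := m1) b k (Fin.init x)
      with h | h <;> rw [h] <;> simp

lemma switchProb_nonneg (h0 : IsState ρ0) (hm0 : IsPOVM m0) (hm1 : IsPOVM m1) :
    0 ≤ switchProb ρ0 ρ1 m0 m1 k :=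
  (E0_const h0 hm0 hm1 0).symm.le.trans (E0_mono h0 hm0 hm1 switchInd_nonneg)

lemma switchProb_le (h0 : IsState ρ0) (hm0 : IsPOVM m0) (hm1 : IsPOVM m1) {t r : ℝ}
    (ht : 0 ≤ t) (hr : 0 ≤ r) (hL0 : llrLaplace ρ0 ρ1 m0 t ≤ r)
    (hL1 : llrLaplace ρ0 ρ1 m1 t ≤ r) : switchProb ρ0 ρ1 m0 m1 k ≤ r ^ k :=
  (E0_mono h0 hm0 hm1 (switchInd_le_exp ht)).trans (E0_exp_neg_mul_Sval_le h0 hm0 hm1 hr hL0 hL1)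

lemma abs_switchCorr_le (h0 : IsState ρ0) (hm0 : IsPOVM m0) (hm1 : IsPOVM m1) {t r : ℝ}
    (ht : 0 < t) (hr : 0 ≤ r) (hL0 : llrLaplace ρ0 ρ1 m0 t ≤ r)
    (hL1 : llrLaplace ρ0 ρ1 m1 t ≤ r) : |switchCorr ρ0 ρ1 m0 m1 k| ≤ r ^ k / t := by
  calc |switchCorr ρ0 ρ1 m0 m1 k|
      ≤ E0 ρ0 ρ1 m0 m1 k fun b x => t⁻¹ * Real.exp (-(t * Sval ρ0 ρ1 m0 m1 b k x)) := by
        simp only [← div_eq_inv_mul]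
        exact (abs_E0_le h0 hm0 hm1 _).trans (E0_mono h0 hm0 hm1 (abs_Sval_mul_switchInd_le ht))
    _ ≤ r ^ k / t := by
        rw [E0_const_mul, div_eq_inv_mul]
        exact mul_le_mul_of_nonneg_left (E0_exp_neg_mul_Sval_le h0 hm0 hm1 hr hL0 hL1)
          (inv_nonneg.mpr ht.le)

lemma abs_meanS_le (h0 : IsState ρ0) (hm0 : IsPOVM m0) (hm1 : IsPOVM m1) {B : ℝ}
    (hB : ∀ b k x, |Sval ρ0 ρ1 m0 m1 b k x| ≤ k * B) : |meanS ρ0 ρ1 m0 m1 k| ≤ k * B :=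
  (abs_E0_le h0 hm0 hm1 _).trans ((E0_mono h0 hm0 hm1 fun b x => hB b k x).trans_eq
    (E0_const h0 hm0 hm1 _))

end Switching

lemma tendsto_varS_succ_sub (h0 : IsState ρ0) (hm0 : IsPOVM m0) (hm1 : IsPOVM m1)
    (hμ0 : 0 < meanW0 ρ0 ρ1 m0) (hμ1 : 0 < meanW0 ρ0 ρ1 m1) :
    Tendsto (fun k => varS ρ0 ρ1 m0 m1 (k + 1) - varS ρ0 ρ1 m0 m1 k) atTop
      (𝓝 (varW0 ρ0 ρ1 m0)) := by
  obtain ⟨t, r, ht, hr0, hr1, hL0, hL1⟩ := exists_llrLaplace_le h0 hm0 hm1 hμ0 hμ1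
  obtain ⟨B, hB⟩ := exists_abs_Sval_le (ρ0 := ρ0) (ρ1 := ρ1) (m0 := m0) (m1 := m1)
  have hrk := tendsto_pow_atTop_nhds_zero_of_lt_one hr0 hr1
  have hp : Tendsto (switchProb ρ0 ρ1 m0 m1) atTop (𝓝 0) :=
    squeeze_zero (fun k => switchProb_nonneg h0 hm0 hm1)
      (fun k => switchProb_le h0 hm0 hm1 ht.le hr0 hL0 hL1) hrk
  have hcorr : Tendsto (switchCorr ρ0 ρ1 m0 m1) atTop (𝓝 0) :=
    squeeze_zero_norm (fun k => abs_switchCorr_le h0 hm0 hm1 ht hr0 hL0 hL1)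
      (by simpa using hrk.div_const t)
  have hmean : Tendsto (fun k => meanS ρ0 ρ1 m0 m1 k * switchProb ρ0 ρ1 m0 m1 k) atTop
      (𝓝 0) := by
    refine squeeze_zero_norm (fun k => ?_)
      (by simpa using (tendsto_self_mul_const_pow_of_lt_one hr0 hr1).const_mul B)
    have hS := abs_meanS_le (k := k) h0 hm0 hm1 hB
    rw [norm_mul, Real.norm_of_nonneg (switchProb_nonneg h0 hm0 hm1), mul_left_comm,
      ← mul_assoc]
    exact mul_le_mul hS (switchProb_le h0 hm0 hm1 ht.le hr0 hL0 hL1)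
      (switchProb_nonneg h0 hm0 hm1) ((abs_nonneg _).trans hS)
  have hlim := ((tendsto_const_nhds (x := varW0 ρ0 ρ1 m0)).add
    (hp.const_mul (varW0 ρ0 ρ1 m1 - varW0 ρ0 ρ1 m0))).add
    ((hp.const_mul ((meanW0 ρ0 ρ1 m1 - meanW0 ρ0 ρ1 m0) ^ 2)).mul
      ((tendsto_const_nhds (x := (1 : ℝ))).sub hp))
    |>.add ((hcorr.sub hmean).const_mul (2 * (meanW0 ρ0 ρ1 m1 - meanW0 ρ0 ρ1 m0)))
  simp only [mul_zero, zero_mul, sub_zero, add_zero] at hlim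
  exact hlim.congr fun k => (varS_succ_sub h0 hm0 hm1).symm

theorem sign_adaptive_variance_convergence_general
    (d : ℕ) (ρ0 ρ1 : Mat (Fin d))
    (h0 : IsState ρ0) (h1 : IsState ρ1)
    (hfs0 : ρ0.PosDef) (hfs1 : ρ1.PosDef) (hne : ρ0 ≠ ρ1)
    (m0 m1 : Fin d → Mat (Fin d))
    (hm0 : IsRankOnePVM m0) (hm1 : IsRankOnePVM m1)
    (hopt0 : KL (outProb ρ0 m0) (outProb ρ1 m0) = Dmeas ρ0 ρ1)
    (hopt1 : KL (outProb ρ1 m1) (outProb ρ0 m1) = Dmeas ρ1 ρ0) :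
    Tendsto (fun k : ℕ =>
        E0 ρ0 ρ1 m0 m1 k (fun b x =>
          (Sval ρ0 ρ1 m0 m1 b k x -
            E0 ρ0 ρ1 m0 m1 k (fun b' x' => Sval ρ0 ρ1 m0 m1 b' k x')) ^ 2) / (k : ℝ))
      atTop (nhds (varW0 ρ0 ρ1 m0)) := by
  have hμ0 := meanW0_pos h0 h1 hfs0 hfs1 hm0
    (outProb_ne_of_KL_eq_Dmeas h0 h1 hfs0 hfs1 hne hopt0)
  have hμ1 := meanW0_pos h0 h1 hfs0 hfs1 hm1
    (outProb_ne_of_KL_eq_Dmeas h1 h0 hfs1 hfs0 hne.symm hopt1).symm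
  exact tendsto_div_natCast_of_tendsto_sub
    (tendsto_varS_succ_sub h0 hm0.isPOVM hm1.isPOVM hμ0 hμ1)

/-- Lemma 13(v) in the paper: for the sign-adaptive SQPRT,
`E_0[(S_k − E_0[S_k])²]/k → Var(W₀)` as `k → ∞`. -/
theorem sign_adaptive_variance_convergence
    (d : ℕ) (hd : 0 < d) (ρ0 ρ1 : Mat (Fin d))
    (h0 : IsState ρ0) (h1 : IsState ρ1)
    (hfs0 : ρ0.PosDef) (hfs1 : ρ1.PosDef) (hne : ρ0 ≠ ρ1)
    (m0 m1 : Fin d → Mat (Fin d))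
    (hm0 : IsRankOnePVM m0) (hm1 : IsRankOnePVM m1)
    (hopt0 : KL (outProb ρ0 m0) (outProb ρ1 m0) = Dmeas ρ0 ρ1)
    (hopt1 : KL (outProb ρ1 m1) (outProb ρ0 m1) = Dmeas ρ1 ρ0) :
    Tendsto (fun k : ℕ =>
        E0 ρ0 ρ1 m0 m1 k (fun b x =>
          (Sval ρ0 ρ1 m0 m1 b k x -
            E0 ρ0 ρ1 m0 m1 k (fun b' x' => Sval ρ0 ρ1 m0 m1 b' k x')) ^ 2) / (k : ℝ))
      atTop (nhds (varW0 ρ0 ρ1 m0)) :=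
  sign_adaptive_variance_convergence_general d ρ0 ρ1 h0 h1 hfs0 hfs1 hne m0 m1 hm0 hm1 hopt0 hopt1

end SQHT
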